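/- For every τ ∈ [0, 1/2] the d'Alembert operators satisfy the identity C(2τ) + I = 2·C(τ)² as bounded operators on L²(X¹,m¹), where I is the identity operator. -/

import Mathlib

open MeasureTheory Set ENNReal

set_option linter.unusedSectionVars false

noncomputable section

/-- A weighted network: countable connected graph without loops or multiple edges,
equipped with positive conductances `c` satisfying `m⁰(x) = ∑_{y∼x} c(xy) < ∞`. -/
structure Network (V : Type) : Type where
  adj : V → V → Prop
  adj_symm : ∀ x y, adj x y → adj y x
  adj_irrefl : ∀ x, ¬ adj x x
  adj_connected : ∀ x y, Relation.ReflTransGen adj x y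
  c : V → V → ℝ
  c_symm : ∀ x y, c x y = c y x
  c_pos : ∀ x y, adj x y → 0 < c x y
  c_eq_zero : ∀ x y, ¬ adj x y → c x y = 0
  c_summable : ∀ x, Summable fun y => c x y

namespace Network

variable {V : Type} [Countable V] [MeasurableSpace V] [DiscreteMeasurableSpace V]

/-- The vertex weight `m⁰(x) = ∑_{y : y ∼ x} c(xy)`. -/
def m0 (N : Network V) (x : V) : ℝ := ∑' y, N.c x y

/-- The measure `m¹` on the metric graph `X¹`.  A point `((x,y),t)` represents the point
at distance `t ∈ (0,1)` from `x` on the edge `[x,y]`; each edge appears with both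
orientations, whence the factor `1/2`. -/
def edgeMeasure (N : Network V) : Measure ((V × V) × ℝ) :=
  Measure.sum fun e : V × V =>
    Measure.map (fun t => (e, t))
      ((ENNReal.ofReal (N.c e.1 e.2 / 2)) • (volume.restrict (Set.Ioo (0:ℝ) 1)))

/-- The identification `(xy,t) ≡ (yx,1-t)` of the two orientations of an edge. -/
def eFlip : (V × V) × ℝ → (V × V) × ℝ := fun p => ((p.1.2, p.1.1), 1 - p.2)

theorem measurable_eFlip : Measurable (eFlip (V := V)) := by
  apply Measurable.prod
  · exact ((measurable_snd.comp measurable_fst).prodMk (measurable_fst.comp measurable_fst))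
  · exact measurable_const.sub measurable_snd

theorem measurePreserving_eFlip (N : Network V) :
    MeasurePreserving (eFlip (V := V)) N.edgeMeasure N.edgeMeasure := by
  refine ⟨measurable_eFlip, ?_⟩
  ext s hs
  rw [Measure.map_apply measurable_eFlip hs, edgeMeasure,
    Measure.sum_apply _ (measurable_eFlip hs), Measure.sum_apply _ hs]
  have key : ∀ e : V × V,
      (Measure.map (fun t => (e, t))
        ((ENNReal.ofReal (N.c e.1 e.2 / 2)) • (volume.restrict (Set.Ioo (0:ℝ) 1))))
          (eFlip ⁻¹' s)
      = (Measure.map (fun t => ((e.2, e.1), t))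
        ((ENNReal.ofReal (N.c e.2 e.1 / 2)) • (volume.restrict (Set.Ioo (0:ℝ) 1)))) s := by
    intro e
    have hme : Measurable fun t : ℝ => (e, t) := measurable_prodMk_left
    have hme' : Measurable fun t : ℝ => ((e.2, e.1), t) := measurable_prodMk_left
    rw [Measure.map_apply hme (measurable_eFlip hs), Measure.map_apply hme' hs,
      Measure.smul_apply, Measure.smul_apply, N.c_symm e.1 e.2]
    congr 1
    have hpre : ((fun t : ℝ => (e, t)) ⁻¹' (eFlip ⁻¹' s))
        = (fun t : ℝ => 1 - t) ⁻¹' ((fun t : ℝ => ((e.2, e.1), t)) ⁻¹' s) := by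
      ext t; simp [eFlip]
    rw [hpre]
    have hmp : MeasurePreserving (fun t : ℝ => 1 - t)
        (volume.restrict (Set.Ioo (0:ℝ) 1)) (volume.restrict (Set.Ioo (0:ℝ) 1)) := by
      have h0 : MeasurePreserving (fun t : ℝ => 1 - t) volume volume :=
        Measure.measurePreserving_sub_left volume 1
      have h1 := h0.restrict_preimage (s := Set.Ioo (0:ℝ) 1) measurableSet_Ioo
      have h2 : (fun t : ℝ => 1 - t) ⁻¹' (Set.Ioo (0:ℝ) 1) = Set.Ioo (0:ℝ) 1 := by
        ext t; constructor <;> (intro ht; simp only [Set.mem_preimage, Set.mem_Ioo] at *; constructor <;> linarith [ht.1, ht.2])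
      rwa [h2] at h1
    exact (hmp.measure_preimage ((hme' hs).nullMeasurableSet)).symm ▸ rfl
  calc
    (∑' e : V × V,
        (Measure.map (fun t => (e, t))
          ((ENNReal.ofReal (N.c e.1 e.2 / 2)) • (volume.restrict (Set.Ioo (0:ℝ) 1))))
            (eFlip ⁻¹' s))
        = ∑' e : V × V,
          (Measure.map (fun t => ((e.2, e.1), t))
            ((ENNReal.ofReal (N.c e.2 e.1 / 2)) • (volume.restrict (Set.Ioo (0:ℝ) 1)))) s :=
      tsum_congr key
    _ = ∑' e : V × V,
          (Measure.map (fun t => (e, t))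
            ((ENNReal.ofReal (N.c e.1 e.2 / 2)) • (volume.restrict (Set.Ioo (0:ℝ) 1)))) s :=
      (Equiv.prodComm V V).tsum_eq fun e =>
        (Measure.map (fun t => (e, t))
          ((ENNReal.ofReal (N.c e.1 e.2 / 2)) • (volume.restrict (Set.Ioo (0:ℝ) 1)))) s

/-- The continuous linear map `F ↦ F ∘ σ` induced by the edge-orientation flip. -/
def flipOp (N : Network V) : Lp ℂ 2 N.edgeMeasure →L[ℂ] Lp ℂ 2 N.edgeMeasure :=
  (Lp.compMeasurePreservingₗᵢ (E := ℂ) (p := 2) ℂ (eFlip (V := V))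
    N.measurePreserving_eFlip).toContinuousLinearMap

/-- The Hilbert space `L²(X¹, m¹)` of square-integrable functions on the metric graph,
realized as the subspace of `L²` functions on oriented edges which are compatible with
the identification `(xy,t) ≡ (yx, 1-t)`. -/
def L2X (N : Network V) : Submodule ℂ (Lp ℂ 2 N.edgeMeasure) :=
  LinearMap.ker (N.flipOp - ContinuousLinearMap.id ℂ (Lp ℂ 2 N.edgeMeasure)).toLinearMap

theorem isClosed_L2X (N : Network V) : IsClosed (N.L2X : Set (Lp ℂ 2 N.edgeMeasure)) :=
  ContinuousLinearMap.isClosed_ker (N.flipOp - ContinuousLinearMap.id ℂ (Lp ℂ 2 N.edgeMeasure))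

instance (N : Network V) : CompleteSpace N.L2X :=
  (isClosed_L2X N).completeSpace_coe

end Network

namespace Network

variable {V : Type} [Countable V] [MeasurableSpace V] [DiscreteMeasurableSpace V]

/-- The value of (a representative of) `F ∈ L²(X¹,m¹)` at the point of the edge `[x,y]`
at distance `t` from `x`. -/
def edgeFun (N : Network V) (F : Lp ℂ 2 N.edgeMeasure) (x y : V) (t : ℝ) : ℂ :=
  F ((x, y), t)

/-- The counting measure on vertices weighted by `m⁰`; `ℓ²(X⁰,m⁰) = Lp ℂ 2 N.vertexMeasure`. -/
def vertexMeasure (N : Network V) : Measure V :=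
  Measure.sum fun x => (ENNReal.ofReal (N.m0 x)) • Measure.dirac x

/-- The averaging operator, at the level of functions. -/
def avgFun (N : Network V) (f : V → V → ℝ → ℂ) (x y : V) (t : ℝ) : ℂ :=
  (N.m0 x : ℂ)⁻¹ * (∑' u, (N.c x u : ℂ) * (∫ s in (0:ℝ)..(1 - t), f x u s))
    + (N.m0 y : ℂ)⁻¹ * (∑' v, (N.c y v : ℂ) * (∫ s in (0:ℝ)..t, f y v s))

/-- `f, g, h` are (continuous versions of) an element of `Ĥ²(X¹,m¹)` together with its first
and second edgewise derivatives: on each edge, `g` is the derivative of `f` and `h` the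
derivative of `g` (in the sense of absolutely continuous functions, via the fundamental
theorem of calculus), and `f`, `g`, `h` are square-integrable on the metric graph. -/
structure IsH2Rep (N : Network V) (f g h : V → V → ℝ → ℂ) : Prop where
  ftc₁ : ∀ x y, N.adj x y → ∀ t ∈ Set.Icc (0:ℝ) 1,
    f x y t = f x y 0 + ∫ s in (0:ℝ)..t, g x y s
  ftc₂ : ∀ x y, N.adj x y → ∀ t ∈ Set.Icc (0:ℝ) 1,
    g x y t = g x y 0 + ∫ s in (0:ℝ)..t, h x y s
  intervalIntegrable_g : ∀ x y, N.adj x y → IntervalIntegrable (g x y) volume 0 1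
  intervalIntegrable_h : ∀ x y, N.adj x y → IntervalIntegrable (h x y) volume 0 1
  memL2_f : MemLp (fun p : (V × V) × ℝ => f p.1.1 p.1.2 p.2) 2 N.edgeMeasure
  memL2_g : MemLp (fun p : (V × V) × ℝ => g p.1.1 p.1.2 p.2) 2 N.edgeMeasure
  memL2_h : MemLp (fun p : (V × V) × ℝ => h p.1.1 p.1.2 p.2) 2 N.edgeMeasure

/-- The graph of the operator `S = -d²/dt²` with domain the functions in `Ĥ²(X¹,m¹)` which are
continuous at the vertices: `(F, G) ∈ graph S` iff `F` has an edgewise `H²` representative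
`f` (with derivatives `g`, `h`), `f` is continuous at each vertex, and `G = -f''`. -/
def SGraph (N : Network V) (F G : N.L2X) : Prop :=
  ∃ f g h : V → V → ℝ → ℂ, N.IsH2Rep f g h ∧
    (⇑(F : Lp ℂ 2 N.edgeMeasure) =ᵐ[N.edgeMeasure] fun p => f p.1.1 p.1.2 p.2) ∧
    (∀ x u v, N.adj x u → N.adj x v → f x u 0 = f x v 0) ∧
    (⇑(G : Lp ℂ 2 N.edgeMeasure) =ᵐ[N.edgeMeasure] fun p => -(h p.1.1 p.1.2 p.2))

/-- The graph of the (Kirchhoff) Laplacian `L`: the restriction of `S` to the functions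
satisfying moreover `F'(x) = ∑_{y∼x} c(xy) F'(xy,0+) = 0` at every vertex `x`. -/
def LGraph (N : Network V) (F G : N.L2X) : Prop :=
  ∃ f g h : V → V → ℝ → ℂ, N.IsH2Rep f g h ∧
    (⇑(F : Lp ℂ 2 N.edgeMeasure) =ᵐ[N.edgeMeasure] fun p => f p.1.1 p.1.2 p.2) ∧
    (∀ x u v, N.adj x u → N.adj x v → f x u 0 = f x v 0) ∧
    (∀ x, Summable fun y => (N.c x y : ℂ) * g x y 0) ∧
    (∀ x, ∑' y, (N.c x y : ℂ) * g x y 0 = 0) ∧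
    (⇑(G : Lp ℂ 2 N.edgeMeasure) =ᵐ[N.edgeMeasure] fun p => -(h p.1.1 p.1.2 p.2))

end Network

/-- The graph of the adjoint of a densely defined operator, described by its graph `T`:
`(G,K) ∈ graph T*` iff `⟪G, SF⟫ = ⟪K, F⟫` for all `(F, SF) ∈ T`. -/
def adjointGraph {H : Type*} [NormedAddCommGroup H] [InnerProductSpace ℂ H]
    (T : Set (H × H)) : Set (H × H) :=
  {q | ∀ p ∈ T, (inner ℂ q.1 p.2 : ℂ) = inner ℂ q.2 p.1}

/-- A densely defined operator given by its graph `T` is self-adjoint if `T* = T`. -/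
def IsSelfAdjointGraph {H : Type*} [NormedAddCommGroup H] [InnerProductSpace ℂ H]
    (T : Set (H × H)) : Prop :=
  Dense (Prod.fst '' T) ∧ adjointGraph T = T

/-- The entire function `Φ(z,t) = t` for `z = 0` and `sin(zt)/z` otherwise. -/
def Phi (z : ℂ) (t : ℝ) : ℂ := if z = 0 then (t : ℂ) else Complex.sin (z * t) / z

namespace Network

variable {V : Type} [Countable V] [MeasurableSpace V] [DiscreteMeasurableSpace V]

/-- Iterated forward extension step for the d'Alembert extension: `fwdExt f n x y s`
represents `F̃(xy, s + n)` for `s ∈ (0,1]`. -/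
def fwdExt (N : Network V) (f : V → V → ℝ → ℂ) : ℕ → V → V → ℝ → ℂ
  | 0 => f
  | (n+1) => fun x y s =>
      (2 / (N.m0 y) : ℂ) * ∑' v, (N.c y v : ℂ) * N.fwdExt f n y v s - N.fwdExt f n y x s

/-- Iterated backward extension step for the d'Alembert extension: `bwdExt f n x y s`
represents `F̃(xy, s - n)` for `s ∈ [0,1)`. -/
def bwdExt (N : Network V) (f : V → V → ℝ → ℂ) : ℕ → V → V → ℝ → ℂ
  | 0 => f
  | (n+1) => fun x y s =>
      (2 / (N.m0 x) : ℂ) * ∑' u, (N.c x u : ℂ) * N.bwdExt f n u x s - N.bwdExt f n y x s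

/-- The d'Alembert extension `F̃` of a function `F` on the metric graph: each edge component
`t ↦ F(xy,t)`, `t ∈ [0,1]`, is extended to the whole real line by the recursion
`F̃(xy,t) = (2/m⁰(y)) ∑_{v∼y} c(yv) F̃(yv,t-1) - F̃(yx,t-1)` for `t > 1` and
`F̃(xy,t) = (2/m⁰(x)) ∑_{u∼x} c(ux) F̃(ux,t+1) - F̃(yx,t+1)` for `t < 0`. -/
def tilde (N : Network V) (f : V → V → ℝ → ℂ) (x y : V) (t : ℝ) : ℂ :=
  if 0 ≤ t ∧ t ≤ 1 then f x y t
  else if 1 < t then N.fwdExt f (⌈t⌉ - 1).toNat x y (t - ((⌈t⌉ - 1 : ℤ) : ℝ))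
  else N.bwdExt f (-⌊t⌋).toNat x y (t + ((-⌊t⌋ : ℤ) : ℝ))

/-- The d'Alembert operator `C(τ)` at the level of functions. -/
def dAlembertFun (N : Network V) (f : V → V → ℝ → ℂ) (τ : ℝ) (x y : V) (t : ℝ) : ℂ :=
  (N.tilde f x y (t + τ) + N.tilde f x y (t - τ)) / 2

/-- The squared norm `‖g‖²_{L²(X¹,m¹)} = (1/2) ∑_x ∑_{y} c(xy) ∫₀¹ |g(xy,t)|² dt`
(with values in `ℝ≥0∞`). -/
def normSq (N : Network V) (g : V → V → ℝ → ℂ) : ℝ≥0∞ :=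
  (1/2 : ℝ≥0∞) * ∑' x, ∑' y, ENNReal.ofReal (N.c x y) *
    ∫⁻ t in Set.Ioo (0:ℝ) 1, ((‖g x y t‖₊ : ℝ≥0∞) ^ 2)

end Network

/-!
On a fixed time slice the recursion defining `F̃` is a map `fwdStep` on functions on oriented
edges, with inverse `bwdStep` (even when the sums over stars diverge); hence
`F̃(·, t + 1) = fwdStep (F̃(·, t))` for every `t ≠ 0`. The step is bounded on the
`c`-weighted `ℓ²` space of edge values (Cauchy–Schwarz at each vertex), and almost every slice of
an `L²` function lies in that space, where the step is linear. So `G = C(τ)F` obeys the same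
recursion along `t + ℤ` unless `t ± τ ∈ ℤ`, and a function obeying the recursion along `t + ℤ` is
its own d'Alembert extension at `t`. Thus for almost every `t`,
`2 (C(τ)G)(t) = G(t + τ) + G(t - τ) = (C(2τ)F)(t) + F(t)`.
-/

namespace ENNReal

theorem add_sq_le_two_mul (a b : ℝ≥0∞) : (a + b) ^ 2 ≤ 2 * (a ^ 2 + b ^ 2) := by
  have h := rpow_add_le_mul_rpow_add_rpow a b one_le_two
  norm_num [rpow_two] at h
  exact_mod_cast h

theorem sq_tsum_mul_le {ι : Type*} (w f : ι → ℝ≥0∞) :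
    (∑' i, w i * f i) ^ 2 ≤ (∑' i, w i) * ∑' i, w i * f i ^ 2 := by
  rw [ENNReal.tsum_eq_iSup_sum, iSup_pow_of_ne_zero two_ne_zero]
  refine iSup_le fun s => ?_
  calc (∑ i ∈ s, w i * f i) ^ 2
      ≤ ((∑ i ∈ s, w i) ^ (1 - (2:ℝ)⁻¹) * (∑ i ∈ s, w i * f i ^ (2:ℝ)) ^ (2:ℝ)⁻¹) ^ 2 := by
        gcongr
        exact inner_le_weight_mul_Lp_of_nonneg s one_le_two w f
    _ = (∑ i ∈ s, w i) * ∑ i ∈ s, w i * f i ^ 2 := by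
        rw [mul_pow, ← rpow_mul_natCast, ← rpow_mul_natCast]
        norm_num
    _ ≤ _ := by gcongr <;> exact ENNReal.sum_le_tsum s

end ENNReal

lemma Complex.enorm_ofReal_of_nonneg {r : ℝ} (hr : 0 ≤ r) : ‖(r : ℂ)‖ₑ = ENNReal.ofReal r := by
  rw [← ofReal_norm, Complex.norm_real, Real.norm_of_nonneg hr]

namespace Network

open Function (swap)

variable {V : Type} [Countable V] [MeasurableSpace V] [DiscreteMeasurableSpace V] (N : Network V)

lemma c_nonneg (x y : V) : 0 ≤ N.c x y := by
  by_cases h : N.adj x y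
  · exact (N.c_pos x y h).le
  · exact (N.c_eq_zero x y h).ge

lemma m0_nonneg (x : V) : 0 ≤ N.m0 x :=
  tsum_nonneg (N.c_nonneg x)

lemma tsum_cast_c (x : V) : ∑' y, (N.c x y : ℂ) = N.m0 x :=
  (Complex.ofReal_tsum _).symm

lemma tsum_ofReal_c (x : V) : ∑' y, ENNReal.ofReal (N.c x y) = ENNReal.ofReal (N.m0 x) :=
  (ENNReal.ofReal_tsum_of_nonneg (N.c_nonneg x) (N.c_summable x)).symm

def fwdStep (g : V → V → ℂ) (x y : V) : ℂ :=
  (2 / (N.m0 y) : ℂ) * ∑' v, (N.c y v : ℂ) * g y v - g y x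

def bwdStep (g : V → V → ℂ) (x y : V) : ℂ :=
  (2 / (N.m0 x) : ℂ) * ∑' u, (N.c x u : ℂ) * g u x - g y x

variable {N}

lemma bwdStep_eq_fwdStep_swap (g : V → V → ℂ) (x y : V) :
    N.bwdStep g x y = N.fwdStep (swap g) y x := rfl

lemma swap_fwdStep (g : V → V → ℂ) : swap (N.fwdStep g) = N.bwdStep (swap g) := rfl

/-- Needs no summability: if the sum over the star of `y` diverges, both `tsum`s are `0`. -/
lemma fwdStep_bwdStep (g : V → V → ℂ) (x y : V) : N.fwdStep (N.bwdStep g) x y = g x y := by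
  by_cases hm : (N.m0 y : ℂ) = 0
  · simp [fwdStep, bwdStep, hm]
  set S := ∑' u, (N.c y u : ℂ) * g u y
  have hsum : ∑' v, (N.c y v : ℂ) * N.bwdStep g y v = S := by
    by_cases hS : Summable fun u => (N.c y u : ℂ) * g u y
    · simp only [bwdStep, mul_sub]
      rw [Summable.tsum_sub _ hS, tsum_mul_right, N.tsum_cast_c]
      · field_simp; ring
      · exact (Complex.summable_ofReal.mpr (N.c_summable y)).mul_right _
    · simp [bwdStep, S, tsum_eq_zero_of_not_summable hS, tsum_neg]
  rw [fwdStep, hsum, bwdStep]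
  ring

lemma bwdStep_fwdStep (g : V → V → ℂ) (x y : V) : N.bwdStep (N.fwdStep g) x y = g x y := by
  rw [bwdStep_eq_fwdStep_swap, swap_fwdStep, fwdStep_bwdStep, swap]

lemma fwdStep_midpoint {g h : V → V → ℂ} {y : V} (hg : Summable fun v => (N.c y v : ℂ) * g y v)
    (hh : Summable fun v => (N.c y v : ℂ) * h y v) (x : V) :
    N.fwdStep (fun a b => (g a b + h a b) / 2) x y = (N.fwdStep g x y + N.fwdStep h x y) / 2 := by
  simp only [fwdStep, mul_div_assoc', mul_add, tsum_div_const, hg.tsum_add hh]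
  ring

variable (N) in
def edgeSqNorm (g : V → V → ℂ) : ℝ≥0∞ :=
  ∑' x, ∑' y, ENNReal.ofReal (N.c x y) * ‖g x y‖ₑ ^ 2

lemma edgeSqNorm_swap (g : V → V → ℂ) : N.edgeSqNorm (swap g) = N.edgeSqNorm g := by
  rw [edgeSqNorm, ENNReal.tsum_comm]
  simp only [swap, N.c_symm]
  rfl

lemma enorm_ofReal_c_mul (x y : V) (z : ℂ) :
    ‖(N.c x y : ℂ) * z‖ₑ = ENNReal.ofReal (N.c x y) * ‖z‖ₑ := by
  rw [enorm_mul, Complex.enorm_ofReal_of_nonneg (N.c_nonneg x y)]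

lemma sq_tsum_enorm_c_mul_le (g : V → ℂ) (y : V) :
    (∑' v, ‖(N.c y v : ℂ) * g v‖ₑ) ^ 2
      ≤ ENNReal.ofReal (N.m0 y) * ∑' v, ENNReal.ofReal (N.c y v) * ‖g v‖ₑ ^ 2 := by
  simp only [enorm_ofReal_c_mul]
  rw [← N.tsum_ofReal_c]
  exact ENNReal.sq_tsum_mul_le _ _

lemma summable_c_mul_of_edgeSqNorm_ne_top {g : V → V → ℂ} (hg : N.edgeSqNorm g ≠ ⊤) (y : V) :
    Summable fun v => (N.c y v : ℂ) * g y v := by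
  refine Summable.of_enorm fun htop => ?_
  have hrow : ∑' v, ENNReal.ofReal (N.c y v) * ‖g y v‖ₑ ^ 2 ≠ ⊤ :=
    ne_top_of_le_ne_top hg (ENNReal.le_tsum (f := fun x => ∑' v, _) y)
  have := (N.sq_tsum_enorm_c_mul_le (g y) y).trans_lt
    (ENNReal.mul_lt_top ENNReal.ofReal_lt_top hrow.lt_top)
  rw [htop] at this
  simp at this

lemma ofReal_m0_mul_enorm_sq_le (g : V → ℂ) (y : V) :
    ENNReal.ofReal (N.m0 y) * ‖(2 / (N.m0 y) : ℂ) * ∑' v, (N.c y v : ℂ) * g v‖ₑ ^ 2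
      ≤ 4 * ∑' v, ENNReal.ofReal (N.c y v) * ‖g v‖ₑ ^ 2 := by
  rcases (N.m0_nonneg y).eq_or_lt with hm | hm
  · simp [← hm]
  have hconst : ‖(2 / (N.m0 y) : ℂ)‖ₑ = ENNReal.ofReal (2 / N.m0 y) := by
    rw [← Complex.ofReal_ofNat, ← Complex.ofReal_div,
      Complex.enorm_ofReal_of_nonneg (by positivity)]
  have hfour : ENNReal.ofReal (N.m0 y) * ENNReal.ofReal (2 / N.m0 y) ^ 2 * ENNReal.ofReal (N.m0 y)
      = 4 := by
    rw [← ENNReal.ofReal_pow (by positivity), ← ENNReal.ofReal_mul hm.le,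
      ← ENNReal.ofReal_mul (by positivity)]
    rw [show N.m0 y * (2 / N.m0 y) ^ 2 * N.m0 y = 4 by field_simp; ring]
    norm_num
  calc ENNReal.ofReal (N.m0 y) * ‖(2 / (N.m0 y) : ℂ) * ∑' v, (N.c y v : ℂ) * g v‖ₑ ^ 2
      ≤ ENNReal.ofReal (N.m0 y) * ENNReal.ofReal (2 / N.m0 y) ^ 2
          * (∑' v, ‖(N.c y v : ℂ) * g v‖ₑ) ^ 2 := by
        rw [enorm_mul, hconst, mul_pow, mul_assoc]
        gcongr
        exact enorm_tsum_le_tsum_enorm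
    _ ≤ ENNReal.ofReal (N.m0 y) * ENNReal.ofReal (2 / N.m0 y) ^ 2
          * (ENNReal.ofReal (N.m0 y) * ∑' v, ENNReal.ofReal (N.c y v) * ‖g v‖ₑ ^ 2) := by
        gcongr
        exact N.sq_tsum_enorm_c_mul_le g y
    _ = 4 * ∑' v, ENNReal.ofReal (N.c y v) * ‖g v‖ₑ ^ 2 := by
        rw [← hfour]; ring

lemma edgeSqNorm_fwdStep_le (g : V → V → ℂ) : N.edgeSqNorm (N.fwdStep g) ≤ 10 * N.edgeSqNorm g := by
  set A : V → ℂ := fun y => (2 / (N.m0 y) : ℂ) * ∑' v, (N.c y v : ℂ) * g y v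
  have hA : ∑' x, ∑' y, ENNReal.ofReal (N.c x y) * ‖A y‖ₑ ^ 2 ≤ 4 * N.edgeSqNorm g := by
    rw [ENNReal.tsum_comm, edgeSqNorm, ← ENNReal.tsum_mul_left]
    refine ENNReal.tsum_le_tsum fun y => ?_
    simp only [N.c_symm _ y, ENNReal.tsum_mul_right, N.tsum_ofReal_c]
    exact ofReal_m0_mul_enorm_sq_le (g y) y
  calc N.edgeSqNorm (N.fwdStep g)
      ≤ ∑' x, ∑' y, (2 * (ENNReal.ofReal (N.c x y) * ‖A y‖ₑ ^ 2)
          + 2 * (ENNReal.ofReal (N.c x y) * ‖swap g x y‖ₑ ^ 2)) := by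
        refine ENNReal.tsum_le_tsum fun x => ENNReal.tsum_le_tsum fun y => ?_
        calc ENNReal.ofReal (N.c x y) * ‖A y - g y x‖ₑ ^ 2
            ≤ ENNReal.ofReal (N.c x y) * (‖A y‖ₑ + ‖g y x‖ₑ) ^ 2 := by
              gcongr; exact enorm_sub_le
          _ ≤ ENNReal.ofReal (N.c x y) * (2 * (‖A y‖ₑ ^ 2 + ‖g y x‖ₑ ^ 2)) := by
              gcongr; exact ENNReal.add_sq_le_two_mul _ _
          _ = _ := by simp only [swap]; ring
    _ = 2 * ∑' x, ∑' y, ENNReal.ofReal (N.c x y) * ‖A y‖ₑ ^ 2 + 2 * N.edgeSqNorm (swap g) := by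
        simp only [ENNReal.tsum_add, ENNReal.tsum_mul_left, edgeSqNorm]
    _ ≤ 2 * (4 * N.edgeSqNorm g) + 2 * N.edgeSqNorm g := by
        rw [edgeSqNorm_swap]; gcongr
    _ = 10 * N.edgeSqNorm g := by ring

lemma edgeSqNorm_bwdStep_le (g : V → V → ℂ) : N.edgeSqNorm (N.bwdStep g) ≤ 10 * N.edgeSqNorm g := by
  calc N.edgeSqNorm (N.bwdStep g) = N.edgeSqNorm (N.fwdStep (swap g)) := by
        rw [← edgeSqNorm_swap (N.fwdStep _)]; rfl
    _ ≤ 10 * N.edgeSqNorm (swap g) := edgeSqNorm_fwdStep_le _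
    _ = 10 * N.edgeSqNorm g := by rw [edgeSqNorm_swap]

lemma fwdExt_succ_apply (f : V → V → ℝ → ℂ) (n : ℕ) (x y : V) (s : ℝ) :
    N.fwdExt f (n + 1) x y s = N.fwdStep (fun a b => N.fwdExt f n a b s) x y := rfl

lemma bwdExt_succ_apply (f : V → V → ℝ → ℂ) (n : ℕ) (x y : V) (s : ℝ) :
    N.bwdExt f (n + 1) x y s = N.bwdStep (fun a b => N.bwdExt f n a b s) x y := rfl

lemma edgeSqNorm_fwdExt_ne_top {f : V → V → ℝ → ℂ} {s : ℝ}
    (hf : N.edgeSqNorm (fun a b => f a b s) ≠ ⊤) (n : ℕ) :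
    N.edgeSqNorm (fun a b => N.fwdExt f n a b s) ≠ ⊤ := by
  induction n with
  | zero => exact hf
  | succ n ih =>
    simp only [fwdExt_succ_apply]
    exact ne_top_of_le_ne_top (ENNReal.mul_ne_top (by norm_num) ih) (edgeSqNorm_fwdStep_le _)

lemma edgeSqNorm_bwdExt_ne_top {f : V → V → ℝ → ℂ} {s : ℝ}
    (hf : N.edgeSqNorm (fun a b => f a b s) ≠ ⊤) (n : ℕ) :
    N.edgeSqNorm (fun a b => N.bwdExt f n a b s) ≠ ⊤ := by
  induction n with
  | zero => exact hf
  | succ n ih =>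
    simp only [bwdExt_succ_apply]
    exact ne_top_of_le_ne_top (ENNReal.mul_ne_top (by norm_num) ih) (edgeSqNorm_bwdStep_le _)

lemma tilde_of_mem (f : V → V → ℝ → ℂ) (x y : V) {t : ℝ} (ht : t ∈ Icc 0 1) :
    N.tilde f x y t = f x y t :=
  if_pos ht

lemma tilde_of_pos (f : V → V → ℝ → ℂ) (x y : V) {t : ℝ} (ht : 0 < t) :
    N.tilde f x y t = N.fwdExt f (⌈t⌉ - 1).toNat x y (t - ((⌈t⌉ - 1 : ℤ) : ℝ)) := by
  by_cases h1 : t ≤ 1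
  · have hc : ⌈t⌉ = 1 := Int.ceil_eq_iff.mpr ⟨by norm_num [ht], by norm_num [h1]⟩
    simp [tilde, ht.le, h1, hc, fwdExt]
  · rw [tilde, if_neg (fun h => h1 h.2), if_pos (not_le.mp h1)]

lemma tilde_of_lt_one (f : V → V → ℝ → ℂ) (x y : V) {t : ℝ} (ht : t < 1) :
    N.tilde f x y t = N.bwdExt f (-⌊t⌋).toNat x y (t + ((-⌊t⌋ : ℤ) : ℝ)) := by
  by_cases h0 : 0 ≤ t
  · have hc : ⌊t⌋ = 0 := Int.floor_eq_iff.mpr ⟨by norm_num [h0], by norm_num [ht]⟩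
    simp [tilde, h0, ht.le, hc, bwdExt]
  · rw [tilde, if_neg (fun h => h0 h.1), if_neg (by linarith)]

lemma edgeSqNorm_tilde_ne_top {f : V → V → ℝ → ℂ} (hf : ∀ s, N.edgeSqNorm (fun a b => f a b s) ≠ ⊤)
    (t : ℝ) : N.edgeSqNorm (fun a b => N.tilde f a b t) ≠ ⊤ := by
  rcases lt_or_ge 0 t with ht | ht
  · simp only [tilde_of_pos f _ _ ht]
    exact edgeSqNorm_fwdExt_ne_top (hf _) _
  · simp only [tilde_of_lt_one f _ _ (ht.trans_lt one_pos)]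
    exact edgeSqNorm_bwdExt_ne_top (hf _) _

lemma tilde_add_one_of_pos (f : V → V → ℝ → ℂ) (x y : V) {t : ℝ} (ht : 0 < t) :
    N.tilde f x y (t + 1) = N.fwdStep (fun a b => N.tilde f a b t) x y := by
  have hceil : (⌈t + 1⌉ - 1).toNat = (⌈t⌉ - 1).toNat + 1 := by
    have := Int.ceil_pos.mpr ht
    rw [Int.ceil_add_one]; omega
  have harg : t + 1 - ((⌈t + 1⌉ - 1 : ℤ) : ℝ) = t - ((⌈t⌉ - 1 : ℤ) : ℝ) := by
    rw [Int.ceil_add_one]; push_cast; ring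
  rw [tilde_of_pos f x y (by linarith), hceil, harg, fwdExt_succ_apply]
  simp only [tilde_of_pos f _ _ ht]

lemma tilde_sub_one_of_lt_one (f : V → V → ℝ → ℂ) (x y : V) {t : ℝ} (ht : t < 1) :
    N.tilde f x y (t - 1) = N.bwdStep (fun a b => N.tilde f a b t) x y := by
  have hfloor : (-⌊t - 1⌋).toNat = (-⌊t⌋).toNat + 1 := by
    have : ⌊t⌋ < 1 := Int.floor_lt.mpr (by exact_mod_cast ht)
    rw [Int.floor_sub_one]; omega
  have harg : t - 1 + ((-⌊t - 1⌋ : ℤ) : ℝ) = t + ((-⌊t⌋ : ℤ) : ℝ) := by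
    rw [Int.floor_sub_one]; push_cast; ring
  rw [tilde_of_lt_one f x y (by linarith), hfloor, harg, bwdExt_succ_apply]
  simp only [tilde_of_lt_one f _ _ ht]

/-- For `t < 0` this is the backward recursion at `t + 1`, inverted by `fwdStep_bwdStep`. At
`t = 0` it fails: `F̃(·, 1)` is not determined by `F̃(·, 0)`. -/
lemma tilde_add_one (f : V → V → ℝ → ℂ) (x y : V) {t : ℝ} (ht : t ≠ 0) :
    N.tilde f x y (t + 1) = N.fwdStep (fun a b => N.tilde f a b t) x y := by
  rcases ht.lt_or_gt with ht | ht
  · have hback : (fun a b => N.tilde f a b t) = N.bwdStep (fun a b => N.tilde f a b (t + 1)) := by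
      ext a b
      rw [← tilde_sub_one_of_lt_one f a b (by linarith), add_sub_cancel_right]
    rw [hback, fwdStep_bwdStep]
  · exact tilde_add_one_of_pos f x y ht

variable (N) in
def RecursionOn (G : V → V → ℝ → ℂ) (t : ℝ) : Prop :=
  ∀ k : ℤ, ∀ x y, G x y (t + k + 1) = N.fwdStep (fun a b => G a b (t + k)) x y

lemma RecursionOn.add_intCast {G : V → V → ℝ → ℂ} {t : ℝ} (h : N.RecursionOn G t) (m : ℤ) :
    N.RecursionOn G (t + m) := fun k x y => by
  have := h (m + k) x y
  push_cast at this ⊢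
  rwa [← add_assoc] at this

lemma RecursionOn.fwdExt_eq {G : V → V → ℝ → ℂ} {s : ℝ} (h : N.RecursionOn G s) (n : ℕ) (x y : V) :
    N.fwdExt G n x y s = G x y (s + n) := by
  induction n generalizing x y with
  | zero => simp [fwdExt]
  | succ n ih =>
    simp only [fwdExt_succ_apply, ih]
    have := h n x y
    push_cast at this ⊢
    rw [← add_assoc, this]

lemma RecursionOn.bwdExt_eq {G : V → V → ℝ → ℂ} {s : ℝ} (h : N.RecursionOn G s) (n : ℕ) (x y : V) :
    N.bwdExt G n x y s = G x y (s - n) := by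
  induction n generalizing x y with
  | zero => simp [bwdExt]
  | succ n ih =>
    simp only [bwdExt_succ_apply, ih]
    have hstep : (fun a b => G a b (s - n)) = N.fwdStep (fun a b => G a b (s - (n + 1 : ℕ))) := by
      ext a b
      have := h (-(n + 1 : ℕ)) a b
      push_cast at this ⊢
      rwa [show s + -((n : ℝ) + 1) + 1 = s - n by ring,
        show s + -((n : ℝ) + 1) = s - (n + 1) by ring] at this
    rw [hstep, bwdStep_fwdStep]

lemma RecursionOn.tilde_eq {G : V → V → ℝ → ℂ} {t : ℝ} (h : N.RecursionOn G t) (x y : V) :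
    N.tilde G x y t = G x y t := by
  rcases lt_or_ge 0 t with ht | ht
  · have hn : (((⌈t⌉ - 1).toNat : ℕ) : ℝ) = ((⌈t⌉ - 1 : ℤ) : ℝ) := by
      have := Int.ceil_pos.mpr ht
      exact_mod_cast Int.toNat_of_nonneg (by omega)
    have h' := h.add_intCast (-(⌈t⌉ - 1))
    rw [show t + ((-(⌈t⌉ - 1) : ℤ) : ℝ) = t - ((⌈t⌉ - 1 : ℤ) : ℝ) by push_cast; ring] at h'
    rw [tilde_of_pos G x y ht, h'.fwdExt_eq, hn, sub_add_cancel]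
  · have hn : (((-⌊t⌋).toNat : ℕ) : ℝ) = ((-⌊t⌋ : ℤ) : ℝ) := by
      have := Int.floor_nonpos ht
      exact_mod_cast Int.toNat_of_nonneg (by omega)
    rw [tilde_of_lt_one G x y (by linarith), (h.add_intCast (-⌊t⌋)).bwdExt_eq, hn,
      add_sub_cancel_right]

lemma recursionOn_tilde (f : V → V → ℝ → ℂ) {t : ℝ} (ht : ∀ k : ℤ, t ≠ k) :
    N.RecursionOn (N.tilde f) t := fun k x y =>
  tilde_add_one f x y fun h => ht (-k) (by push_cast; linarith)

lemma recursionOn_dAlembertFun {f : V → V → ℝ → ℂ}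
    (hf : ∀ s, N.edgeSqNorm (fun a b => f a b s) ≠ ⊤) {τ t : ℝ}
    (hplus : ∀ k : ℤ, t + τ ≠ k) (hminus : ∀ k : ℤ, t - τ ≠ k) :
    N.RecursionOn (N.dAlembertFun f τ) t := by
  intro k x y
  have hsum (u : ℝ) (y : V) := summable_c_mul_of_edgeSqNorm_ne_top (edgeSqNorm_tilde_ne_top hf u) y
  unfold dAlembertFun
  rw [fwdStep_midpoint (g := fun a b => N.tilde f a b (t + k + τ))
    (h := fun a b => N.tilde f a b (t + k - τ)) (hsum _ _) (hsum _ _)]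
  rw [show t + k + 1 + τ = t + τ + k + 1 by ring, show t + k + 1 - τ = t - τ + k + 1 by ring,
    show t + k + τ = t + τ + k by ring, show t + k - τ = t - τ + k by ring,
    recursionOn_tilde f hplus, recursionOn_tilde f hminus]

lemma two_mul_dAlembertFun_dAlembertFun {f : V → V → ℝ → ℂ}
    (hf : ∀ s, N.edgeSqNorm (fun a b => f a b s) ≠ ⊤) {τ t : ℝ}
    (hplus : ∀ k : ℤ, t + 2 * τ ≠ k) (hzero : ∀ k : ℤ, t ≠ k) (hminus : ∀ k : ℤ, t - 2 * τ ≠ k)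
    (x y : V) :
    2 * N.dAlembertFun (N.dAlembertFun f τ) τ x y t
      = N.dAlembertFun f (2 * τ) x y t + N.tilde f x y t := by
  have hrec₁ : N.RecursionOn (N.dAlembertFun f τ) (t + τ) :=
    recursionOn_dAlembertFun hf (by rwa [add_assoc, ← two_mul]) (by rwa [add_sub_cancel_right])
  have hrec₂ : N.RecursionOn (N.dAlembertFun f τ) (t - τ) :=
    recursionOn_dAlembertFun hf (by rwa [sub_add_cancel]) (by rwa [sub_sub, ← two_mul])
  rw [dAlembertFun, hrec₁.tilde_eq, hrec₂.tilde_eq]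
  simp only [dAlembertFun, add_sub_cancel_right, sub_add_cancel]
  ring_nf

lemma fwdStep_congr {g g' : V → V → ℂ} (h : ∀ a b, N.adj a b → g a b = g' a b) {x y : V}
    (hxy : N.adj x y) : N.fwdStep g x y = N.fwdStep g' x y := by
  have hterm (v : V) : (N.c y v : ℂ) * g y v = (N.c y v : ℂ) * g' y v := by
    by_cases hyv : N.adj y v
    · rw [h y v hyv]
    · simp [N.c_eq_zero y v hyv]
  simp only [fwdStep, hterm, h y x (N.adj_symm x y hxy)]

lemma bwdStep_congr {g g' : V → V → ℂ} (h : ∀ a b, N.adj a b → g a b = g' a b) {x y : V}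
    (hxy : N.adj x y) : N.bwdStep g x y = N.bwdStep g' x y :=
  fwdStep_congr (fun a b hab => h b a (N.adj_symm a b hab)) (N.adj_symm x y hxy)

lemma fwdExt_congr {f₁ f₂ : V → V → ℝ → ℂ} {s : ℝ}
    (h : ∀ a b, N.adj a b → f₁ a b s = f₂ a b s) (n : ℕ) {x y : V} (hxy : N.adj x y) :
    N.fwdExt f₁ n x y s = N.fwdExt f₂ n x y s := by
  induction n generalizing x y with
  | zero => exact h x y hxy
  | succ n ih => exact fwdStep_congr (fun a b hab => ih hab) hxy

lemma bwdExt_congr {f₁ f₂ : V → V → ℝ → ℂ} {s : ℝ}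
    (h : ∀ a b, N.adj a b → f₁ a b s = f₂ a b s) (n : ℕ) {x y : V} (hxy : N.adj x y) :
    N.bwdExt f₁ n x y s = N.bwdExt f₂ n x y s := by
  induction n generalizing x y with
  | zero => exact h x y hxy
  | succ n ih => exact bwdStep_congr (fun a b hab => ih hab) hxy

lemma tilde_congr {f₁ f₂ : V → V → ℝ → ℂ} {t : ℝ}
    (h : ∀ k : ℤ, t + k ∈ Icc 0 1 → ∀ a b, N.adj a b → f₁ a b (t + k) = f₂ a b (t + k))
    {x y : V} (hxy : N.adj x y) : N.tilde f₁ x y t = N.tilde f₂ x y t := by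
  rcases lt_or_ge 0 t with ht | ht
  · have hbase := h (-(⌈t⌉ - 1))
    rw [show t + ((-(⌈t⌉ - 1) : ℤ) : ℝ) = t - ((⌈t⌉ - 1 : ℤ) : ℝ) by push_cast; ring] at hbase
    rw [tilde_of_pos _ x y ht, tilde_of_pos _ x y ht]
    refine fwdExt_congr (hbase ?_) _ hxy
    constructor <;> push_cast <;> linarith [Int.ceil_lt_add_one t, Int.le_ceil t]
  · rw [tilde_of_lt_one _ x y (by linarith), tilde_of_lt_one _ x y (by linarith)]
    refine bwdExt_congr (h _ ?_) _ hxy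
    constructor <;> push_cast <;> linarith [Int.floor_le t, Int.lt_floor_add_one t]

lemma ae_edgeMeasure_iff {P : (V × V) × ℝ → Prop} :
    (∀ᵐ p ∂N.edgeMeasure, P p)
      ↔ ∀ x y, N.adj x y → ∀ᵐ t ∂volume.restrict (Ioo (0:ℝ) 1), P ((x, y), t) := by
  simp only [edgeMeasure, Measure.ae_sum_iff, (measurableEmbedding_prodMk_left _).ae_map_iff,
    Prod.forall]
  refine forall₂_congr fun x y => ?_
  by_cases hxy : N.adj x y
  · have hc : ENNReal.ofReal (N.c x y / 2) ≠ 0 := by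
      simpa using N.c_pos x y hxy
    simp [Measure.ae_ennreal_smul_measure_iff hc, hxy]
  · simp [N.c_eq_zero x y hxy, hxy]

lemma ae_forall_intCast_add_ne (c : ℝ) : ∀ᵐ t ∂volume, ∀ k : ℤ, t + c ≠ k := by
  refine ae_all_iff.mpr fun k => ?_
  filter_upwards [measure_eq_zero_iff_ae_notMem.mp (measure_singleton (k - c : ℝ))] with t ht
  contrapose! ht
  simp [← ht]

lemma dAlembertFun_ae_congr {f₁ f₂ : V → V → ℝ → ℂ}
    (h : (fun p : (V × V) × ℝ => f₁ p.1.1 p.1.2 p.2) =ᵐ[N.edgeMeasure]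
      fun p => f₂ p.1.1 p.1.2 p.2) (σ : ℝ) :
    (fun p : (V × V) × ℝ => N.dAlembertFun f₁ σ p.1.1 p.1.2 p.2) =ᵐ[N.edgeMeasure]
      fun p => N.dAlembertFun f₂ σ p.1.1 p.1.2 p.2 := by
  have hIoo : ∀ᵐ s ∂volume, s ∈ Ioo (0:ℝ) 1 → ∀ a b, N.adj a b → f₁ a b s = f₂ a b s := by
    rw [← ae_restrict_iff' measurableSet_Ioo, ae_all_iff]
    intro a
    rw [ae_all_iff]
    intro b
    by_cases hab : N.adj a b
    · filter_upwards [ae_edgeMeasure_iff.mp h a b hab] with s hs _ using hs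
    · exact .of_forall fun s hab' => absurd hab' hab
  have hIcc : ∀ᵐ s ∂volume, s ∈ Icc (0:ℝ) 1 → ∀ a b, N.adj a b → f₁ a b s = f₂ a b s := by
    filter_upwards [hIoo, ae_forall_intCast_add_ne 0] with s hs hs' hmem
    refine hs ⟨hmem.1.lt_of_ne ?_, hmem.2.lt_of_ne ?_⟩
    · simpa using (hs' 0).symm
    · simpa using hs' 1
  have hshift (c : ℝ) : ∀ᵐ t ∂volume, ∀ k : ℤ,
      t + c + k ∈ Icc 0 1 → ∀ a b, N.adj a b → f₁ a b (t + c + k) = f₂ a b (t + c + k) :=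
    ae_all_iff.mpr fun k => by
      simpa only [add_assoc] using
        (measurePreserving_add_right volume (c + k)).quasiMeasurePreserving.ae hIcc
  refine ae_edgeMeasure_iff.mpr fun x y hxy => ?_
  filter_upwards [ae_restrict_of_ae (hshift σ), ae_restrict_of_ae (hshift (-σ))] with t h₁ h₂
  rw [← sub_eq_add_neg] at h₂
  simp only [dAlembertFun, tilde_congr h₁ hxy, tilde_congr h₂ hxy]

lemma ae_two_mul_dAlembertFun_dAlembertFun {f : V → V → ℝ → ℂ}
    (hf : ∀ s, N.edgeSqNorm (fun a b => f a b s) ≠ ⊤) (τ : ℝ) :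
    ∀ᵐ p ∂N.edgeMeasure, 2 * N.dAlembertFun (N.dAlembertFun f τ) τ p.1.1 p.1.2 p.2
      = N.dAlembertFun f (2 * τ) p.1.1 p.1.2 p.2 + f p.1.1 p.1.2 p.2 := by
  refine ae_edgeMeasure_iff.mpr fun x y _ => ?_
  filter_upwards [ae_restrict_of_ae (ae_forall_intCast_add_ne (2 * τ)),
    ae_restrict_of_ae (ae_forall_intCast_add_ne 0),
    ae_restrict_of_ae (ae_forall_intCast_add_ne (-(2 * τ))),
    ae_restrict_mem measurableSet_Ioo] with t hplus hzero hminus ht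
  rw [two_mul_dAlembertFun_dAlembertFun hf hplus (by simpa using hzero)
    (by simpa [← sub_eq_add_neg] using hminus), tilde_of_mem f x y (Ioo_subset_Icc_self ht)]

lemma lintegral_edgeMeasure {g : (V × V) × ℝ → ℝ≥0∞} (hg : Measurable g) :
    ∫⁻ p, g p ∂N.edgeMeasure
      = ∫⁻ t in Ioo (0:ℝ) 1, ∑' e : V × V, ENNReal.ofReal (N.c e.1 e.2 / 2) * g (e, t) := by
  simp only [edgeMeasure, lintegral_sum_measure, (measurableEmbedding_prodMk_left _).lintegral_map,
    lintegral_smul_measure, smul_eq_mul]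
  rw [lintegral_tsum (f := fun e t => ENNReal.ofReal (N.c e.1 e.2 / 2) * g (e, t))
    fun e => ((hg.comp measurable_prodMk_left).const_mul _).aemeasurable]
  exact tsum_congr fun e => (lintegral_const_mul _ (hg.comp measurable_prodMk_left)).symm

lemma ae_edgeSqNorm_ne_top (F : Lp ℂ 2 N.edgeMeasure) :
    ∀ᵐ t ∂volume.restrict (Ioo (0:ℝ) 1), N.edgeSqNorm (fun x y => N.edgeFun F x y t) ≠ ⊤ := by
  have hmeas : Measurable fun p => ‖F p‖ₑ ^ 2 :=
    (Lp.stronglyMeasurable F).measurable.enorm.pow_const 2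
  have hfin : ∫⁻ p, ‖F p‖ₑ ^ 2 ∂N.edgeMeasure ≠ ⊤ := by
    simpa using (lintegral_rpow_enorm_lt_top_of_eLpNorm_lt_top two_ne_zero ENNReal.ofNat_ne_top
      (Lp.eLpNorm_lt_top F)).ne
  rw [lintegral_edgeMeasure hmeas] at hfin
  filter_upwards [ae_lt_top' (Measurable.tsum fun e =>
    (hmeas.comp measurable_prodMk_left).const_mul _).aemeasurable hfin] with t ht
  have hhalf (x y : V) : ENNReal.ofReal (N.c x y) = 2 * ENNReal.ofReal (N.c x y / 2) := by
    rw [← ENNReal.ofReal_ofNat 2, ← ENNReal.ofReal_mul zero_le_two]; ring_nf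
  rw [ENNReal.tsum_prod'] at ht
  simp only [edgeSqNorm, edgeFun, hhalf, mul_assoc, ENNReal.tsum_mul_left]
  exact ENNReal.mul_ne_top ENNReal.ofNat_ne_top ht.ne

lemma exists_ae_eq_forall_edgeSqNorm_ne_top (F : Lp ℂ 2 N.edgeMeasure) :
    ∃ f : V → V → ℝ → ℂ, (⇑F =ᵐ[N.edgeMeasure] fun p => f p.1.1 p.1.2 p.2) ∧
      ∀ t, N.edgeSqNorm (fun x y => f x y t) ≠ ⊤ := by
  classical
  refine ⟨fun x y t => if N.edgeSqNorm (fun a b => N.edgeFun F a b t) = ⊤ then 0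
    else N.edgeFun F x y t, ae_edgeMeasure_iff.mpr fun x y _ => ?_, fun t => ?_⟩
  · filter_upwards [ae_edgeSqNorm_ne_top F] with t ht
    rw [if_neg ht]
    rfl
  · by_cases ht : N.edgeSqNorm (fun a b => N.edgeFun F a b t) = ⊤
    · simp only [ht, ↓reduceIte]
      simp [edgeSqNorm]
    · simp only [ht, ↓reduceIte]
      exact ht

end Network

theorem dAlembert_double_angle_identity_general
    {V : Type} [Countable V] [MeasurableSpace V] [DiscreteMeasurableSpace V]
    (N : Network V)
    (C : ℝ → (N.L2X →L[ℂ] N.L2X))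
    (hC : ∀ σ : ℝ, ∀ F : N.L2X,
      ⇑(C σ F : Lp ℂ 2 N.edgeMeasure) =ᵐ[N.edgeMeasure]
        fun p => N.dAlembertFun (N.edgeFun (F : Lp ℂ 2 N.edgeMeasure)) σ p.1.1 p.1.2 p.2)
    (τ : ℝ) :
    C (2 * τ) + ContinuousLinearMap.id ℂ N.L2X = (2:ℂ) • ((C τ).comp (C τ)) := by
  have hCrep (σ : ℝ) (F : N.L2X) {f : V → V → ℝ → ℂ}
      (hF : ⇑(F : Lp ℂ 2 N.edgeMeasure) =ᵐ[N.edgeMeasure] fun p => f p.1.1 p.1.2 p.2) :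
      ⇑(C σ F : Lp ℂ 2 N.edgeMeasure) =ᵐ[N.edgeMeasure]
        fun p => N.dAlembertFun f σ p.1.1 p.1.2 p.2 :=
    (hC σ F).trans (Network.dAlembertFun_ae_congr (f₁ := N.edgeFun F) hF σ)
  ext1 F
  obtain ⟨f, hFf, hf⟩ := Network.exists_ae_eq_forall_edgeSqNorm_ne_top (F : Lp ℂ 2 N.edgeMeasure)
  refine Subtype.ext (Lp.ext ?_)
  filter_upwards [Lp.coeFn_add (C (2 * τ) F : Lp ℂ 2 N.edgeMeasure) F,
    Lp.coeFn_smul (2:ℂ) (C τ (C τ F) : Lp ℂ 2 N.edgeMeasure), hCrep (2 * τ) F hFf,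
    hCrep τ (C τ F) (hCrep τ F hFf), hFf, Network.ae_two_mul_dAlembertFun_dAlembertFun hf τ]
    with p hadd hsmul h2τ hττ hF hpt
  simp only [add_apply, smul_apply, ContinuousLinearMap.id_apply, ContinuousLinearMap.comp_apply,
    Submodule.coe_add, Submodule.coe_smul, hadd, hsmul, Pi.add_apply, Pi.smul_apply, smul_eq_mul,
    h2τ, hττ, hF, hpt]

/-- For every `τ ∈ [0,1/2]` the d'Alembert operators satisfy
`C(2τ) + I = 2·C(τ)²` as bounded operators on `L²(X¹,m¹)`.  Here
`C : ℝ → B(L²(X¹,m¹))` is the family of (bounded) d'Alembert operators, characterized by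
`(C(τ)F)(xy,t) = (F̃(xy,t+τ) + F̃(xy,t-τ))/2` almost everywhere. -/
theorem dAlembert_double_angle_identity
    {V : Type} [Countable V] [MeasurableSpace V] [DiscreteMeasurableSpace V]
    (N : Network V)
    (C : ℝ → (N.L2X →L[ℂ] N.L2X))
    (hC : ∀ σ : ℝ, ∀ F : N.L2X,
      ⇑(C σ F : Lp ℂ 2 N.edgeMeasure) =ᵐ[N.edgeMeasure]
        fun p => N.dAlembertFun (N.edgeFun (F : Lp ℂ 2 N.edgeMeasure)) σ p.1.1 p.1.2 p.2)
    (τ : ℝ) (hτ : τ ∈ Set.Icc (0:ℝ) (1/2)) :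
    C (2 * τ) + ContinuousLinearMap.id ℂ N.L2X = (2:ℂ) • ((C τ).comp (C τ)) :=
  dAlembert_double_angle_identity_general N C hC τ
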